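/- arXiv:2006.08467 — 3 statements merged into one kernel-verified Lean document; each statement's English description precedes it below -/
import Mathlib

section
/- If Σ is a set of fully-existential rules (every head atom contains at least one existential variable), then for every instance I and every term v in the oblivious chase of (I, Σ), the existential depth of v equals the rank of v. -/
namespace ChasePaper

/-- Rules: atoms are (predicate, list of variables). -/
structure Rule (P V : Type) where
  body : List (P × List V)
  head : List (P × List V)

/-- Terms appearing in the chase: constants, (instance) variables, and fresh
variables `z_{(σ,π)}` named by the rule, the existential variable, and a substitution. -/
inductive GTerm (P C V : Type) where
  | const : C → GTerm P C V
  | var   : V → GTerm P C V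
  | fresh : Rule P V → V → (V → GTerm P C V) → GTerm P C V

abbrev GAtom (P C V : Type) := P × List (GTerm P C V)

variable {P C V : Type}

def bodyVars (σ : Rule P V) : List V := σ.body.flatMap Prod.snd
def headVars (σ : Rule P V) : List V := σ.head.flatMap Prod.snd
def frontier [DecidableEq V] (σ : Rule P V) : List V :=
  (bodyVars σ).filter (· ∈ headVars σ)

/-- A rule is datalog if all head variables occur in the body. -/
def IsDatalog (σ : Rule P V) : Prop := ∀ v ∈ headVars σ, v ∈ bodyVars σ
/-- A rule is fully-existential if every head atom contains an existential variable. -/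
def IsFE (σ : Rule P V) : Prop := ∀ a ∈ σ.head, ∃ v ∈ a.2, v ∉ bodyVars σ

def applyAtom (π : V → GTerm P C V) (a : P × List V) : GAtom P C V :=
  (a.1, a.2.map π)

def restrictBody [DecidableEq V] (σ : Rule P V) (π : V → GTerm P C V) : V → GTerm P C V :=
  fun u => if u ∈ bodyVars σ then π u else GTerm.var u

def restrictFr [DecidableEq V] (σ : Rule P V) (π : V → GTerm P C V) : V → GTerm P C V :=
  fun u => if u ∈ frontier σ then π u else GTerm.var u

/-- Oblivious naming of fresh variables: `z_{(σ,π)}`. -/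
def extendO [DecidableEq V] (σ : Rule P V) (π : V → GTerm P C V) : V → GTerm P C V :=
  fun v => if v ∈ bodyVars σ then π v else GTerm.fresh σ v (restrictBody σ π)

/-- Semi-oblivious naming of fresh variables: `z_{(σ,π|fr(σ))}`. -/
def extendSO [DecidableEq V] (σ : Rule P V) (π : V → GTerm P C V) : V → GTerm P C V :=
  fun v => if v ∈ bodyVars σ then π v else GTerm.fresh σ v (restrictFr σ π)

def isTrigger (σ : Rule P V) (π : V → GTerm P C V) (S : Set (GAtom P C V)) : Prop :=
  ∀ a ∈ σ.body, applyAtom π a ∈ S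

/-- Breadth-first oblivious chase. -/
def ochase [DecidableEq V] (Rs : Set (Rule P V)) (I : Set (GAtom P C V)) : ℕ → Set (GAtom P C V)
  | 0 => I
  | i+1 => ochase Rs I i ∪
      {f | ∃ σ ∈ Rs, ∃ π, isTrigger σ π (ochase Rs I i) ∧ ∃ a ∈ σ.head, f = applyAtom (extendO σ π) a}

/-- Breadth-first semi-oblivious chase. -/
def sochase [DecidableEq V] (Rs : Set (Rule P V)) (I : Set (GAtom P C V)) : ℕ → Set (GAtom P C V)
  | 0 => I
  | i+1 => sochase Rs I i ∪
      {f | ∃ σ ∈ Rs, ∃ π, isTrigger σ π (sochase Rs I i) ∧ ∃ a ∈ σ.head, f = applyAtom (extendSO σ π) a}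

def ochaseFull [DecidableEq V] (Rs : Set (Rule P V)) (I : Set (GAtom P C V)) : Set (GAtom P C V) :=
  ⋃ i, ochase Rs I i
def sochaseFull [DecidableEq V] (Rs : Set (Rule P V)) (I : Set (GAtom P C V)) : Set (GAtom P C V) :=
  ⋃ i, sochase Rs I i

/-- Rank of a fact: the smallest breadth-first round at which it appears. -/
noncomputable def rankO [DecidableEq V] (Rs : Set (Rule P V)) (I : Set (GAtom P C V))
    (f : GAtom P C V) : ℕ := sInf {i | f ∈ ochase Rs I i}
noncomputable def rankSO [DecidableEq V] (Rs : Set (Rule P V)) (I : Set (GAtom P C V))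
    (f : GAtom P C V) : ℕ := sInf {i | f ∈ sochase Rs I i}

/-- Rank of a term: the smallest round at which some fact contains it. -/
noncomputable def trankO [DecidableEq V] (Rs : Set (Rule P V)) (I : Set (GAtom P C V))
    (t : GTerm P C V) : ℕ := sInf {i | ∃ f ∈ ochase Rs I i, t ∈ f.2}
noncomputable def trankSO [DecidableEq V] (Rs : Set (Rule P V)) (I : Set (GAtom P C V))
    (t : GTerm P C V) : ℕ := sInf {i | ∃ f ∈ sochase Rs I i, t ∈ f.2}

/-- Existential depth of a term. -/
def depth : GTerm P C V → ℕ
  | .const _ => 0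
  | .var _ => 0
  | .fresh σ _ π => 1 + List.foldr (fun v m => max (depth (π v)) m) 0 (bodyVars σ)

/-- Frontier existential depth of a term. -/
def frdepth [DecidableEq V] : GTerm P C V → ℕ
  | .const _ => 0
  | .var _ => 0
  | .fresh σ _ π =>
      if frontier σ = ([] : List V) then 1
      else 1 + List.foldr (fun v m => max (frdepth (π v)) m) 0 (frontier σ)

/-- Existential depth of a fact: max depth of its terms. -/
def depthF (f : GAtom P C V) : ℕ := List.foldr (fun t m => max (depth t) m) 0 f.2
def frdepthF [DecidableEq V] (f : GAtom P C V) : ℕ :=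
  List.foldr (fun t m => max (frdepth t) m) 0 f.2

/-- Active domain of a set of atoms. -/
def adom (S : Set (GAtom P C V)) : Set (GTerm P C V) := {t | ∃ f ∈ S, t ∈ f.2}

def mapAtom (h : GTerm P C V → GTerm P C V) (f : GAtom P C V) : GAtom P C V :=
  (f.1, f.2.map h)

/-- An embedding from `S` to `S'`: a substitution mapping every atom of `S` into `S'`. -/
def IsEmbedding (h : GTerm P C V → GTerm P C V) (S S' : Set (GAtom P C V)) : Prop :=
  ∀ f ∈ S, mapAtom h f ∈ S'

/-- `I` is an instance w.r.t. an arity function: finite, arity-correct,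
and using only constants and variables. -/
def IsInstance (ar : P → ℕ) (I : Set (GAtom P C V)) : Prop :=
  I.Finite ∧ ∀ f ∈ I, f.2.length = ar f.1 ∧
    ∀ t ∈ f.2, (∃ c, t = GTerm.const c) ∨ (∃ v, t = GTerm.var v)

def RuleOk (ar : P → ℕ) (σ : Rule P V) : Prop :=
  ∀ a ∈ σ.body ++ σ.head, a.2.length = ar a.1

/-- The critical instance over `ar` with special constant `a`. -/
def critical (ar : P → ℕ) (a : C) : Set (GAtom P C V) :=
  {f | f.2 = List.replicate (ar f.1) (GTerm.const a)}


/-!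
For a trigger `(σ, π)` let `bodyDepth σ π` be the largest depth of a body term. Every
fresh term it creates has depth `bodyDepth σ π + 1`, and since the rules are fully existential,
every fact it creates contains such a term, so the fact has depth exactly `bodyDepth σ π + 1`.
By induction on rounds, every fact `f` is already produced in round `depthF f`: the body facts of
its trigger have depth at most `bodyDepth σ π`, so the trigger is already active in that round.
Thus every term appears by round `depth t`; conversely, a round-`i` term has depth at most `i`
because the instance has only terms of depth `0`.
-/

theorem _root_.List.foldr_max_le_iff {α : Type*} (g : α → ℕ) (L : List α) (m : ℕ) :
    L.foldr (fun v k => max (g v) k) 0 ≤ m ↔ ∀ u ∈ L, g u ≤ m := by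
  induction L with
  | nil => simp
  | cons x xs ih => simp [ih]

theorem _root_.List.le_foldr_max {α : Type*} (g : α → ℕ) {L : List α} {u : α}
    (h : u ∈ L) :
    g u ≤ L.foldr (fun v k => max (g v) k) 0 :=
  (List.foldr_max_le_iff g L _).1 le_rfl u h

section Chase

theorem mem_bodyVars_iff {σ : Rule P V} {v : V} :
    v ∈ bodyVars σ ↔ ∃ b ∈ σ.body, v ∈ b.2 := by
  simp [bodyVars, List.mem_flatMap]

def bodyDepth (σ : Rule P V) (π : V → GTerm P C V) : ℕ :=
  (bodyVars σ).foldr (fun u k => max (depth (π u)) k) 0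

theorem depth_le_bodyDepth {σ : Rule P V} (π : V → GTerm P C V) {u : V}
    (hu : u ∈ bodyVars σ) : depth (π u) ≤ bodyDepth σ π :=
  List.le_foldr_max (fun u => depth (π u)) hu

theorem depthF_applyAtom_le_bodyDepth {σ : Rule P V} (π : V → GTerm P C V) {b : P × List V}
    (hb : b ∈ σ.body) : depthF (applyAtom π b) ≤ bodyDepth σ π := by
  refine (List.foldr_max_le_iff _ _ _).2 fun t ht => ?_
  obtain ⟨u, hu, rfl⟩ := List.mem_map.1 ht
  exact depth_le_bodyDepth π (mem_bodyVars_iff.2 ⟨b, hb, hu⟩)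

theorem depth_eq_zero_of_isInstance {ar : P → ℕ} {I : Set (GAtom P C V)}
    (hI : IsInstance ar I) : ∀ f ∈ I, ∀ t ∈ f.2, depth t = 0 := fun f hf t ht => by
  rcases (hI.2 f hf).2 t ht with ⟨c, rfl⟩ | ⟨v, rfl⟩ <;> rfl

variable [DecidableEq V]

theorem depth_fresh_restrictBody (σ : Rule P V) (π : V → GTerm P C V) (v : V) :
    depth (GTerm.fresh σ v (restrictBody σ π)) = bodyDepth σ π + 1 := by
  rw [depth, Nat.add_comm, bodyDepth]
  congr 1
  exact List.foldr_ext _ _ _ fun u hu _ => by simp [restrictBody, hu]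

theorem depth_extendO_le (σ : Rule P V) (π : V → GTerm P C V) (v : V) :
    depth (extendO σ π v) ≤ bodyDepth σ π + 1 := by
  unfold extendO
  split_ifs with hv
  · exact (depth_le_bodyDepth π hv).trans (Nat.le_succ _)
  · exact (depth_fresh_restrictBody σ π v).le

theorem depthF_applyAtom_extendO {σ : Rule P V} (hσ : IsFE σ) (π : V → GTerm P C V)
    {a : P × List V} (ha : a ∈ σ.head) :
    depthF (applyAtom (extendO σ π) a) = bodyDepth σ π + 1 := by
  refine le_antisymm ((List.foldr_max_le_iff _ _ _).2 fun t ht => ?_) ?_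
  · obtain ⟨u, -, rfl⟩ := List.mem_map.1 ht
    exact depth_extendO_le σ π u
  · obtain ⟨v, hv, hvb⟩ := hσ a ha
    have hfresh := List.le_foldr_max depth (List.mem_map_of_mem (f := extendO σ π) hv)
    rwa [extendO, if_neg hvb, depth_fresh_restrictBody] at hfresh

variable (Rs : Set (Rule P V)) (I : Set (GAtom P C V))

theorem monotone_ochase : Monotone (ochase Rs I) :=
  monotone_nat_of_le_succ fun _ => Set.subset_union_left

theorem depth_le_of_mem_ochase (hI : ∀ f ∈ I, ∀ t ∈ f.2, depth t = 0) :
    ∀ i, ∀ f ∈ ochase Rs I i, ∀ t ∈ f.2, depth t ≤ i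
  | 0, f, hf, t, ht => (hI f hf t ht).le
  | i + 1, f, hf, t, ht => by
    rcases hf with hf | ⟨σ, -, π, htrig, a, -, rfl⟩
    · exact (depth_le_of_mem_ochase hI i f hf t ht).trans (Nat.le_succ i)
    · obtain ⟨v, -, rfl⟩ := List.mem_map.1 ht
      have hbody : bodyDepth σ π ≤ i := (List.foldr_max_le_iff _ _ _).2 fun u hu => by
        obtain ⟨b, hb, hub⟩ := mem_bodyVars_iff.1 hu
        exact depth_le_of_mem_ochase hI i _ (htrig b hb) (π u) (List.mem_map_of_mem hub)
      exact (depth_extendO_le σ π v).trans (Nat.succ_le_succ hbody)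

variable {Rs I}

theorem isTrigger_ochase_bodyDepth {σ : Rule P V} {π : V → GTerm P C V} {i : ℕ}
    (htrig : isTrigger σ π (ochase Rs I i))
    (hdepthF : ∀ f ∈ ochase Rs I i, f ∈ ochase Rs I (depthF f)) :
    isTrigger σ π (ochase Rs I (bodyDepth σ π)) := fun b hb =>
  monotone_ochase Rs I (depthF_applyAtom_le_bodyDepth π hb) (hdepthF _ (htrig b hb))

theorem applyAtom_extendO_mem_ochase_bodyDepth {σ : Rule P V} (hσ : σ ∈ Rs)
    {π : V → GTerm P C V} {i : ℕ} (htrig : isTrigger σ π (ochase Rs I i))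
    (hdepthF : ∀ f ∈ ochase Rs I i, f ∈ ochase Rs I (depthF f))
    {a : P × List V} (ha : a ∈ σ.head) :
    applyAtom (extendO σ π) a ∈ ochase Rs I (bodyDepth σ π + 1) :=
  Or.inr ⟨σ, hσ, π, isTrigger_ochase_bodyDepth htrig hdepthF, a, ha, rfl⟩

theorem mem_ochase_depthF (hFE : ∀ σ ∈ Rs, IsFE σ) :
    ∀ i, ∀ f ∈ ochase Rs I i, f ∈ ochase Rs I (depthF f)
  | 0, _, hf => monotone_ochase Rs I (Nat.zero_le _) hf
  | i + 1, _, hf => by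
    rcases hf with hf | ⟨σ, hσ, π, htrig, a, ha, rfl⟩
    · exact mem_ochase_depthF hFE i _ hf
    · rw [depthF_applyAtom_extendO (hFE σ hσ) π ha]
      exact applyAtom_extendO_mem_ochase_bodyDepth hσ htrig (mem_ochase_depthF hFE i) ha

theorem exists_mem_ochase_depth (hFE : ∀ σ ∈ Rs, IsFE σ) :
    ∀ i, ∀ f ∈ ochase Rs I i, ∀ t ∈ f.2, ∃ g ∈ ochase Rs I (depth t), t ∈ g.2
  | 0, f, hf, _, ht => ⟨f, monotone_ochase Rs I (Nat.zero_le _) hf, ht⟩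
  | i + 1, f, hf, t, ht => by
    rcases hf with hf | ⟨σ, hσ, π, htrig, a, ha, rfl⟩
    · exact exists_mem_ochase_depth hFE i f hf t ht
    obtain ⟨v, hv, rfl⟩ := List.mem_map.1 ht
    by_cases hvb : v ∈ bodyVars σ
    · obtain ⟨b, hb, hvb'⟩ := mem_bodyVars_iff.1 hvb
      rw [extendO, if_pos hvb]
      exact exists_mem_ochase_depth hFE i _ (htrig b hb) (π v) (List.mem_map_of_mem hvb')
    · have hdepth : depth (extendO σ π v) = bodyDepth σ π + 1 := by
        rw [extendO, if_neg hvb, depth_fresh_restrictBody]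
      rw [hdepth]
      exact ⟨_, applyAtom_extendO_mem_ochase_bodyDepth hσ htrig (mem_ochase_depthF hFE i) ha,
        List.mem_map_of_mem hv⟩

end Chase

/-- for a set of fully-existential rules, existential depth and rank
coincide on every term of the oblivious chase. -/
theorem statement2 {P C V : Type} [DecidableEq V] (ar : P → ℕ)
    (Rs : Set (Rule P V)) (hFE : ∀ σ ∈ Rs, IsFE σ)
    (I : Set (GAtom P C V)) (hI : IsInstance ar I) :
    ∀ t ∈ adom (ochaseFull Rs I), depth t = trankO Rs I t := by
  rintro t ⟨f, hf, htf⟩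
  obtain ⟨i, hfi⟩ := Set.mem_iUnion.1 hf
  have hleast : IsLeast {j | ∃ g ∈ ochase Rs I j, t ∈ g.2} (depth t) :=
    ⟨exists_mem_ochase_depth hFE i f hfi t htf, fun _ ⟨g, hg, htg⟩ =>
      depth_le_of_mem_ochase Rs I (depth_eq_zero_of_isInstance hI) _ g hg t htg⟩
  exact hleast.csInf_eq.symm

end ChasePaper
end

section
/- For any embedding φ from instance I to instance I' and any i ≥ 0, there exists an embedding φ' extending φ from the rank-i oblivious chase of (I, Σ) to the rank-i oblivious chase of (I', Σ) that preserves the existential depth of terms: depth(v) = depth(φ'(v)) for every term v. -/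
namespace ChasePaper

variable {P C V : Type}

/-!
The extension renames every fresh term `z_(σ,π)` to `z_(σ,φ'∘π)`. This commutes with firing
triggers, so `φ'` maps each chase round into the corresponding round over `I'`. The depth of
`z_(σ,π)` depends only on the depths of the `π`-images of the body variables, which are terms of
the previous round, so depth preservation follows by induction on the round.
-/

/-- Outside the body variables of `σ` the renamed substitution stays the identity, as in
`restrictBody`, so that `liftTerm φ` commutes with `extendO`. -/
def liftTerm [DecidableEq V] (φ : GTerm P C V → GTerm P C V) : GTerm P C V → GTerm P C V
  | .const c => φ (.const c)
  | .var v => φ (.var v)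
  | .fresh σ v μ => .fresh σ v (fun u => if u ∈ bodyVars σ then liftTerm φ (μ u) else .var u)

lemma isTrigger.mem_adom {σ : Rule P V} {π : V → GTerm P C V} {S : Set (GAtom P C V)}
    (h : isTrigger σ π S) {u : V} (hu : u ∈ bodyVars σ) : π u ∈ adom S := by
  obtain ⟨a, ha, hu⟩ := List.mem_flatMap.1 hu
  exact ⟨applyAtom π a, h a ha, List.mem_map_of_mem hu⟩

lemma mapAtom_applyAtom (h : GTerm P C V → GTerm P C V) (π : V → GTerm P C V)
    (a : P × List V) : mapAtom h (applyAtom π a) = applyAtom (h ∘ π) a := by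
  simp [mapAtom, applyAtom]

lemma isTrigger.comp {σ : Rule P V} {π : V → GTerm P C V} {S S' : Set (GAtom P C V)}
    {h : GTerm P C V → GTerm P C V} (hπ : isTrigger σ π S) (hh : IsEmbedding h S S') :
    isTrigger σ (h ∘ π) S' := fun a ha =>
  mapAtom_applyAtom h π a ▸ hh _ (hπ a ha)

lemma liftTerm_comp_extendO [DecidableEq V] (φ : GTerm P C V → GTerm P C V) (σ : Rule P V)
    (π : V → GTerm P C V) : liftTerm φ ∘ extendO σ π = extendO σ (liftTerm φ ∘ π) := by
  funext v
  simp only [Function.comp_apply, extendO]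
  split
  · rfl
  · simp only [liftTerm, restrictBody, GTerm.fresh.injEq, true_and]
    funext u
    by_cases hu : u ∈ bodyVars σ <;> simp [restrictBody, hu]

lemma depth_extendO_congr [DecidableEq V] (σ : Rule P V) {π π' : V → GTerm P C V}
    (h : ∀ u ∈ bodyVars σ, depth (π u) = depth (π' u)) (v : V) :
    depth (extendO σ π v) = depth (extendO σ π' v) := by
  unfold extendO
  split
  · exact h v ‹_›
  · simp only [depth, restrictBody, Nat.add_left_cancel_iff]
    exact List.foldr_ext _ _ _ fun u hu _ => by simp only [if_pos hu, h u hu]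

lemma mem_adom_ochase_succ [DecidableEq V] {Rs : Set (Rule P V)} {I : Set (GAtom P C V)}
    {i : ℕ} {t : GTerm P C V} (ht : t ∈ adom (ochase Rs I (i + 1))) :
    t ∈ adom (ochase Rs I i) ∨
      ∃ σ π v, isTrigger σ π (ochase Rs I i) ∧ t = extendO σ π v := by
  obtain ⟨f, hf | ⟨σ, -, π, hπ, a, -, rfl⟩, ht⟩ := ht
  · exact Or.inl ⟨f, hf, ht⟩
  · obtain ⟨v, -, rfl⟩ := List.mem_map.1 ht
    exact Or.inr ⟨σ, π, v, hπ, rfl⟩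

section liftTerm

variable [DecidableEq V] {φ : GTerm P C V → GTerm P C V} {Rs : Set (Rule P V)}
  {I I' : Set (GAtom P C V)}

lemma isEmbedding_liftTerm_ochase (h : IsEmbedding (liftTerm φ) I I') (i : ℕ) :
    IsEmbedding (liftTerm φ) (ochase Rs I i) (ochase Rs I' i) := by
  induction i with
  | zero => exact h
  | succ i ih =>
    rintro f (hf | ⟨σ, hσ, π, hπ, a, ha, rfl⟩)
    · exact Or.inl (ih f hf)
    · refine Or.inr ⟨σ, hσ, liftTerm φ ∘ π, hπ.comp ih, a, ha, ?_⟩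
      rw [mapAtom_applyAtom, liftTerm_comp_extendO]

lemma depth_liftTerm_ochase (h : ∀ t ∈ adom I, depth t = depth (liftTerm φ t)) (i : ℕ) :
    ∀ t ∈ adom (ochase Rs I i), depth t = depth (liftTerm φ t) := by
  induction i with
  | zero => exact h
  | succ i ih =>
    intro t ht
    rcases mem_adom_ochase_succ ht with ht | ⟨σ, π, v, hπ, rfl⟩
    · exact ih t ht
    · rw [← Function.comp_apply (f := liftTerm φ), liftTerm_comp_extendO]
      exact depth_extendO_congr σ (fun u hu => ih _ (hπ.mem_adom hu)) v

end liftTerm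

lemma IsInstance.liftTerm_eq {ar : P → ℕ} {I : Set (GAtom P C V)} [DecidableEq V]
    (hI : IsInstance ar I) (φ : GTerm P C V → GTerm P C V) {t : GTerm P C V}
    (ht : t ∈ adom I) : liftTerm φ t = φ t := by
  obtain ⟨f, hf, ht⟩ := ht
  rcases (hI.2 f hf).2 t ht with ⟨c, rfl⟩ | ⟨v, rfl⟩ <;> rfl

lemma IsInstance.depth_eq_zero {ar : P → ℕ} {I : Set (GAtom P C V)} (hI : IsInstance ar I)
    {t : GTerm P C V} (ht : t ∈ adom I) : depth t = 0 := by
  obtain ⟨f, hf, ht⟩ := ht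
  rcases (hI.2 f hf).2 t ht with ⟨c, rfl⟩ | ⟨v, rfl⟩ <;> rfl

lemma IsEmbedding.mem_adom {h : GTerm P C V → GTerm P C V} {S S' : Set (GAtom P C V)}
    (hh : IsEmbedding h S S') {t : GTerm P C V} (ht : t ∈ adom S) : h t ∈ adom S' := by
  obtain ⟨f, hf, ht⟩ := ht
  exact ⟨mapAtom h f, hh f hf, List.mem_map_of_mem ht⟩

lemma IsEmbedding.congr {h h' : GTerm P C V → GTerm P C V} {S S' : Set (GAtom P C V)}
    (hh : IsEmbedding h S S') (heq : ∀ t ∈ adom S, h' t = h t) : IsEmbedding h' S S' :=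
  fun f hf => by
    have hmap : mapAtom h' f = mapAtom h f :=
      congrArg _ (List.map_congr_left fun t ht => heq t ⟨f, hf, ht⟩)
    exact hmap ▸ hh f hf

/-- any embedding `φ : I → I'` extends, for every rank `i`, to an
embedding `φ'` between the rank-`i` oblivious chases that preserves the
existential depth of terms. -/
theorem statement3 {P C V : Type} [DecidableEq V] (ar : P → ℕ)
    (Rs : Set (Rule P V)) (I I' : Set (GAtom P C V))
    (hI : IsInstance ar I) (hI' : IsInstance ar I')
    (φ : GTerm P C V → GTerm P C V) (hφ : IsEmbedding φ I I') (i : ℕ) :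
    ∃ φ' : GTerm P C V → GTerm P C V,
      (∀ t ∈ adom I, φ' t = φ t) ∧
      IsEmbedding φ' (ochase Rs I i) (ochase Rs I' i) ∧
      ∀ t ∈ adom (ochase Rs I i), depth t = depth (φ' t) := by
  have hagree : ∀ t ∈ adom I, liftTerm φ t = φ t := fun t ht => hI.liftTerm_eq φ ht
  have hdepth : ∀ t ∈ adom I, depth t = depth (liftTerm φ t) := fun t ht => by
    rw [hagree t ht, hI.depth_eq_zero ht, hI'.depth_eq_zero (hφ.mem_adom ht)]
  exact ⟨liftTerm φ, hagree, isEmbedding_liftTerm_ochase (hφ.congr hagree) i,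
    depth_liftTerm_ochase hdepth i⟩

end ChasePaper
end

section
/- If the semi-oblivious chase of Σ terminates on the critical instance I_a, then there exists a constant k_d such that for every instance I, the frontier depth of every term in so-chase(I, Σ) is bounded by k_d. -/
/-!
Collapsing every constant and instance variable to `a`, and renaming fresh variables
accordingly, maps the semi-oblivious chase of any instance round by round into that of the
critical instance, and this collapse does not change frontier depths. In the critical chase a
term created at round `i` has frontier depth at most `i`, so if that chase is complete after `k`
rounds, `k` bounds the frontier depth of every term of every semi-oblivious chase.
-/

namespace ChasePaper

variable {P C V : Type}

section

variable [DecidableEq V]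

lemma foldr_max_congr {α : Type*} {f g : α → ℕ} :
    ∀ {l : List α}, (∀ v ∈ l, f v = g v) →
      l.foldr (fun v m => max (f v) m) 0 = l.foldr (fun v m => max (g v) m) 0
  | [], _ => rfl
  | x :: l, h => by
    simp only [List.foldr]
    rw [h x (by simp), foldr_max_congr fun v hv => h v (by simp [hv])]

lemma foldr_max_le {α : Type*} {f : α → ℕ} {n : ℕ} :
    ∀ {l : List α}, (∀ v ∈ l, f v ≤ n) → l.foldr (fun v m => max (f v) m) 0 ≤ n
  | [], _ => Nat.zero_le n
  | x :: l, h => by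
    simp only [List.foldr]
    exact max_le (h x (by simp)) (foldr_max_le fun v hv => h v (by simp [hv]))

lemma IsEmbedding.sochase {h : GTerm P C V → GTerm P C V}
    (hfresh : ∀ σ π, h ∘ extendSO σ π = extendSO σ (h ∘ π))
    (Rs : Set (Rule P V)) {I J : Set (GAtom P C V)} (hIJ : IsEmbedding h I J) (i : ℕ) :
    IsEmbedding h (sochase Rs I i) (sochase Rs J i) := by
  induction i with
  | zero => exact hIJ
  | succ i ih =>
    rintro f (hf | ⟨σ, hσ, π, htrig, b, hb, rfl⟩)
    · exact Or.inl (ih f hf)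
    · refine Or.inr ⟨σ, hσ, h ∘ π, fun c hc => ?_, b, hb, ?_⟩
      · simpa [mapAtom, applyAtom] using ih _ (htrig c hc)
      · simp only [mapAtom, applyAtom, List.map_map, hfresh]

def collapse (a : C) : GTerm P C V → GTerm P C V
  | .const _ => .const a
  | .var _ => .const a
  | .fresh σ v π => .fresh σ v (restrictFr σ fun u => collapse a (π u))

lemma collapse_comp_extendSO (a : C) (σ : Rule P V) (π : V → GTerm P C V) :
    collapse a ∘ extendSO σ π = extendSO σ (collapse a ∘ π) := by
  funext v
  by_cases hv : v ∈ bodyVars σ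
  · simp [extendSO, hv]
  · simp only [Function.comp_apply, extendSO, if_neg hv, collapse]
    congr 1
    funext u
    by_cases hu : u ∈ frontier σ <;> simp [restrictFr, hu]

lemma frdepth_collapse (a : C) (t : GTerm P C V) : frdepth (collapse a t) = frdepth t := by
  induction t with
  | const c => rfl
  | var v => rfl
  | fresh σ v π ih =>
    simp only [collapse, frdepth]
    split
    · rfl
    · congr 1
      exact foldr_max_congr fun u hu => by simp only [restrictFr, if_pos hu]; exact ih u

lemma isEmbedding_collapse_critical {ar : P → ℕ} (a : C) {I : Set (GAtom P C V)}
    (hI : IsInstance ar I) : IsEmbedding (collapse a) I (critical ar a) := by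
  intro f hf
  obtain ⟨hlen, hterms⟩ := hI.2 f hf
  refine List.eq_replicate_iff.mpr ⟨by simpa [mapAtom] using hlen, ?_⟩
  simp only [mapAtom, List.mem_map]
  rintro _ ⟨t, ht, rfl⟩
  rcases hterms t ht with ⟨c, rfl⟩ | ⟨v, rfl⟩ <;> rfl

lemma frdepth_le_of_mem_adom_sochase (Rs : Set (Rule P V)) {I : Set (GAtom P C V)} {d : ℕ}
    (hI : ∀ t ∈ adom I, frdepth t ≤ d) (i : ℕ) :
    ∀ t ∈ adom (sochase Rs I i), frdepth t ≤ d + i := by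
  induction i with
  | zero => exact hI
  | succ i ih =>
    rintro t ⟨f, hf | ⟨σ, hσ, π, htrig, b, hb, rfl⟩, ht⟩
    · exact (ih t ⟨f, hf, ht⟩).trans (Nat.le_succ _)
    · obtain ⟨v, -, rfl⟩ := List.mem_map.mp ht
      have hbody : ∀ u ∈ bodyVars σ, frdepth (π u) ≤ d + i := by
        intro u hu
        obtain ⟨c, hc, huc⟩ := List.mem_flatMap.mp hu
        exact ih (π u) ⟨applyAtom π c, htrig c hc, List.mem_map_of_mem huc⟩
      by_cases hv : v ∈ bodyVars σ
      · simp only [extendSO, if_pos hv]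
        exact (hbody v hv).trans (Nat.le_succ _)
      · simp only [extendSO, if_neg hv, frdepth]
        split
        · omega
        · have hfr : (frontier σ).foldr
              (fun u m => max (frdepth (restrictFr σ π u)) m) 0 ≤ d + i :=
            foldr_max_le fun u hu => by
              simp only [restrictFr, if_pos hu]
              exact hbody u (List.mem_filter.mp hu).1
          omega

lemma frdepth_le_of_mem_adom_sochase_critical (ar : P → ℕ) (a : C) (Rs : Set (Rule P V))
    (i : ℕ) : ∀ t ∈ adom (sochase Rs (critical ar a) i), frdepth t ≤ i := by
  simpa using frdepth_le_of_mem_adom_sochase Rs (d := 0) (by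
    rintro t ⟨f, hf, ht⟩
    rw [show f.2 = _ from hf] at ht
    rw [List.eq_of_mem_replicate ht]
    rfl) i

end

theorem statement12_general {P C V : Type} [DecidableEq V] (ar : P → ℕ) (a : C)
    (Rs : Set (Rule P V))
    (hterm : ∃ k, sochase Rs (critical ar a : Set (GAtom P C V)) k
        = sochaseFull Rs (critical ar a)) :
    ∃ kd : ℕ, ∀ I : Set (GAtom P C V), IsInstance ar I →
      ∀ t ∈ adom (sochaseFull Rs I), frdepth t ≤ kd := by
  obtain ⟨k, hk⟩ := hterm
  refine ⟨k, fun I hI t ⟨f, hf, ht⟩ => ?_⟩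
  obtain ⟨i, hi⟩ := Set.mem_iUnion.mp hf
  have hcrit : mapAtom (collapse a) f ∈ sochase Rs (critical ar a) k := by
    rw [hk]
    exact Set.mem_iUnion.mpr ⟨i, (isEmbedding_collapse_critical a hI).sochase
      (collapse_comp_extendSO a) Rs i f hi⟩
  rw [← frdepth_collapse a t]
  exact frdepth_le_of_mem_adom_sochase_critical ar a Rs k _
    ⟨_, hcrit, List.mem_map_of_mem ht⟩

/-- if the semi-oblivious chase terminates on the critical
instance, then there is a uniform bound `k_d` on the frontier depth of all terms
of the semi-oblivious chase, over all instances. -/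
theorem statement12 {P C V : Type} [DecidableEq V] (ar : P → ℕ) (a : C)
    (Rs : Set (Rule P V)) (hRs : ∀ σ ∈ Rs, RuleOk ar σ)
    (hterm : ∃ k, sochase Rs (critical ar a : Set (GAtom P C V)) k
        = sochaseFull Rs (critical ar a)) :
    ∃ kd : ℕ, ∀ I : Set (GAtom P C V), IsInstance ar I →
      ∀ t ∈ adom (sochaseFull Rs I), frdepth t ≤ kd :=
  statement12_general ar a Rs hterm

end ChasePaper
end
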